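/- arXiv:math/0501131 — 2 statements merged into one kernel-verified Lean document; each statement's English description precedes it below -/
import Mathlib

section
/- Let ψ ∈ Ω∞ and let κ₁, κ₂ : [0,∞) → [0,∞) be increasing, continuous, unbounded functions with κ_i(t) > 0 for t > 0, such that κ₁ − κ₂ is bounded. Then f_{L,κ₁}(x) = f_{L,κ₂}(x) for every Banach limit L ∈ BL(ℝ₊) and every x ∈ M₊(ψ), and likewise f_{L',κ₁}(x) = f_{L',κ₂}(x) for every Banach limit L' ∈ BL(ℕ) and every x ∈ M₊(ψ). -/
open MeasureTheory Filter Set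

noncomputable section

/-- `f` is bounded and continuous on `[0,∞)`, i.e. (the restriction of) `f`
belongs to `C_b([0,∞))`. -/
def IsCb (f : ℝ → ℝ) : Prop :=
  ContinuousOn f (Ici 0) ∧ ∃ M : ℝ, ∀ t ∈ Ici (0:ℝ), |f t| ≤ M

/-- Bounded real sequences, i.e. elements of `ℓ∞(ℕ)`. -/
def IsBddSeq (a : ℕ → ℝ) : Prop := ∃ M : ℝ, ∀ n, |a n| ≤ M

/-- A Banach limit on `C_b([0,∞))`: a positive linear translation-invariant
functional with `L(1) = 1`.  (The underlying map is defined on all of `ℝ → ℝ`;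
the axioms only refer to its values on bounded continuous functions on `[0,∞)`.) -/
structure BanachLimitR where
  toFun : (ℝ → ℝ) → ℝ
  map_add : ∀ f g : ℝ → ℝ, IsCb f → IsCb g →
    toFun (fun t => f t + g t) = toFun f + toFun g
  map_smul : ∀ (c : ℝ) (f : ℝ → ℝ), IsCb f → toFun (fun t => c * f t) = c * toFun f
  pos : ∀ f : ℝ → ℝ, IsCb f → (∀ t ∈ Ici (0:ℝ), 0 ≤ f t) → 0 ≤ toFun f
  map_one : toFun (fun _ => 1) = 1
  shift_inv : ∀ f : ℝ → ℝ, IsCb f → ∀ s : ℝ, 0 ≤ s → toFun (fun t => f (t + s)) = toFun f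

/-- A Banach limit on `ℓ∞(ℕ)`: a positive linear shift-invariant functional
with `L'(1) = 1`. -/
structure BanachLimitN where
  toFun : (ℕ → ℝ) → ℝ
  map_add : ∀ a b : ℕ → ℝ, IsBddSeq a → IsBddSeq b →
    toFun (fun n => a n + b n) = toFun a + toFun b
  map_smul : ∀ (c : ℝ) (a : ℕ → ℝ), IsBddSeq a → toFun (fun n => c * a n) = c * toFun a
  pos : ∀ a : ℕ → ℝ, IsBddSeq a → (∀ n, 0 ≤ a n) → 0 ≤ toFun a
  map_one : toFun (fun _ => 1) = 1
  shift_inv : ∀ a : ℕ → ℝ, IsBddSeq a → toFun (fun n => a (n + 1)) = toFun a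

/-- An element of `SC_b^*([0,∞))`: a positive linear functional on `C_b([0,∞))`
with `γ(1) = 1` vanishing on `C₀([0,∞))`. -/
structure SCbStar where
  toFun : (ℝ → ℝ) → ℝ
  map_add : ∀ f g : ℝ → ℝ, IsCb f → IsCb g →
    toFun (fun t => f t + g t) = toFun f + toFun g
  map_smul : ∀ (c : ℝ) (f : ℝ → ℝ), IsCb f → toFun (fun t => c * f t) = c * toFun f
  pos : ∀ f : ℝ → ℝ, IsCb f → (∀ t ∈ Ici (0:ℝ), 0 ≤ f t) → 0 ≤ toFun f
  map_one : toFun (fun _ => 1) = 1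
  vanish : ∀ f : ℝ → ℝ, IsCb f → Tendsto f atTop (nhds 0) → toFun f = 0

/-- A positive linear functional on `C_b([0,∞))`. -/
structure PosLinFunc where
  toFun : (ℝ → ℝ) → ℝ
  map_add : ∀ f g : ℝ → ℝ, IsCb f → IsCb g →
    toFun (fun t => f t + g t) = toFun f + toFun g
  map_smul : ∀ (c : ℝ) (f : ℝ → ℝ), IsCb f → toFun (fun t => c * f t) = c * toFun f
  pos : ∀ f : ℝ → ℝ, IsCb f → (∀ t ∈ Ici (0:ℝ), 0 ≤ f t) → 0 ≤ toFun f

/-- `ψ ∈ Ω_∞`: concave on `[0,∞)`, nonnegative, `ψ(t) → 0` as `t → 0⁺` and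
`ψ(t) → ∞` as `t → ∞`. -/
def OmegaInf (ψ : ℝ → ℝ) : Prop :=
  ConcaveOn ℝ (Ici 0) ψ ∧ (∀ t ∈ Ici (0:ℝ), 0 ≤ ψ t) ∧
    Tendsto ψ (nhdsWithin 0 (Ioi 0)) (nhds 0) ∧ Tendsto ψ atTop atTop

/-- The decreasing rearrangement `x*` of a measurable function `x` on `[0,∞)`. -/
def decRearr (x : ℝ → ℝ) (t : ℝ) : ℝ :=
  sInf {s : ℝ | 0 ≤ s ∧ volume {u : ℝ | 0 ≤ u ∧ s < |x u|} ≤ ENNReal.ofReal t}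

/-- The weighted mean function `φ(x)(t) = (1/ψ(t)) ∫₀ᵗ x*(s) ds`. -/
def phiW (ψ x : ℝ → ℝ) (t : ℝ) : ℝ := (∫ s in (0:ℝ)..t, decRearr x s) / ψ t

/-- Membership in the Marcinkiewicz space `M(ψ)`. -/
def MemM (ψ x : ℝ → ℝ) : Prop :=
  Measurable x ∧ ∃ M : ℝ, ∀ t > (0:ℝ), phiW ψ x t ≤ M

/-- Membership in the positive cone `M₊(ψ)`. -/
def MemMplus (ψ x : ℝ → ℝ) : Prop := MemM ψ x ∧ ∀ t ∈ Ici (0:ℝ), 0 ≤ x t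

/-- The Marcinkiewicz norm `‖x‖_{M(ψ)} = sup_{t>0} φ(x)(t)`. -/
def MNorm (ψ x : ℝ → ℝ) : ℝ := ⨆ t > (0:ℝ), phiW ψ x t

/-- `κ ∈ 𝒦`: strictly increasing, invertible (as a map of `[0,∞)` onto itself),
differentiable, unbounded, with `κ(0) = 0`. -/
def MemK (κ : ℝ → ℝ) : Prop :=
  StrictMonoOn κ (Ici 0) ∧ κ 0 = 0 ∧ MapsTo κ (Ici 0) (Ici 0) ∧
    SurjOn κ (Ici 0) (Ici 0) ∧ DifferentiableOn ℝ κ (Ici 0) ∧ Tendsto κ atTop atTop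

/-- `f_{L,κ}(x) = L(φ_κ(x))` for a Banach limit `L` on `C_b([0,∞))`; the function
`φ_κ(x)`, bounded and continuous on `(0,∞)`, is fed to `L` as `t ↦ φ_κ(x)(max t 1)`. -/
def fL (L : BanachLimitR) (ψ κ x : ℝ → ℝ) : ℝ :=
  L.toFun fun t => phiW ψ x (κ (max t 1))

/-- `f_{L',κ}(x) = L'({φ(x)(κ(n))}ₙ)` for a Banach limit `L'` on `ℓ∞(ℕ)`. -/
def fLN (L' : BanachLimitN) (ψ κ x : ℝ → ℝ) : ℝ :=
  L'.toFun fun n => phiW ψ x (κ n)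

/-- `κ` has restricted growth with respect to `ψ` (`κ ∈ R(ψ)`): the sequence
`ψ(κ(n))/ψ(κ(n+1))` is almost convergent to `1`. -/
def RestrictedGrowth (ψ κ : ℝ → ℝ) : Prop :=
  ∀ L' : BanachLimitN, L'.toFun (fun n => ψ (κ n) / ψ (κ ((n:ℝ) + 1))) = 1

/-- `κ` has dominated growth with respect to `ψ` (`κ ∈ D(ψ)`):
`(ψ∘κ)'(t)/(ψ∘κ)(t) < C/t` for some `C > 0` and all `t > 0`. -/
def DominatedGrowth (ψ κ : ℝ → ℝ) : Prop :=
  (∀ t > (0:ℝ), DifferentiableAt ℝ (fun u => ψ (κ u)) t) ∧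
    ∃ C > (0:ℝ), ∀ t > (0:ℝ), deriv (fun u => ψ (κ u)) t / ψ (κ t) < C / t

/-- `κ` is of exponential increase: `κ(t + C) > 2κ(t)` for some `C > 0` and all `t > 0`. -/
def ExpIncrease (κ : ℝ → ℝ) : Prop := ∃ C > (0:ℝ), ∀ t > (0:ℝ), 2 * κ t < κ (t + C)

/-- The piecewise linear extension map `p : ℓ∞(ℕ) → C_b([0,∞))`. -/
def plExt (a : ℕ → ℝ) (t : ℝ) : ℝ :=
  a ⌊t⌋₊ + (a (⌊t⌋₊ + 1) - a ⌊t⌋₊) * (t - (⌊t⌋₊ : ℝ))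

/-- The Cesàro mean `C(g)(μ) = (1/μ) ∫₀^μ g(s) ds` (with `C(g)(0) := g(0)`). -/
def cesaro (g : ℝ → ℝ) (μ : ℝ) : ℝ :=
  if μ = 0 then g 0 else (∫ s in (0:ℝ)..μ, g s) / μ

/-- `M_k(g)(λ) = (1/k(λ)) ∫₀^λ g(s) k'(s) ds` (with `M_k(g)(0) := g(0)`). -/
def MkFun (k g : ℝ → ℝ) (l : ℝ) : ℝ :=
  if l = 0 then g 0 else (∫ s in (0:ℝ)..l, g s * deriv k s) / k l

/-- The Connes-Dixmier functional `τ_{γ,k}(x) = γ(M_k(φ(x)))`; the function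
`M_k(φ(x))`, bounded and continuous on `(0,∞)`, is fed to `γ` as `t ↦ M_k(φ(x))(max t 1)`. -/
def tauCD (γ : SCbStar) (ψ k x : ℝ → ℝ) : ℝ :=
  γ.toFun fun t => MkFun k (phiW ψ x) (max t 1)

/-- A set `Λ` of Banach limits has the Cesàro limit property if for each
`g ∈ C_b([0,∞))` both `liminf C(g)` and `limsup C(g)` are attained as values `L(g)`, `L ∈ Λ`. -/
def CesaroLimitProp (Λ : Set BanachLimitR) : Prop :=
  ∀ g : ℝ → ℝ, IsCb g →
    (∃ L ∈ Λ, L.toFun g = liminf (cesaro g) atTop) ∧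
    (∃ L ∈ Λ, L.toFun g = limsup (cesaro g) atTop)

/-- Dilation invariance of an element of `SC_b^*([0,∞))`. -/
def DilationInvariant (ω : SCbStar) : Prop :=
  ∀ g : ℝ → ℝ, IsCb g → ∀ a : ℝ, 0 < a → ω.toFun (fun t => g (a * t)) = ω.toFun g

open Topology

/-!
Write `φ(x) = F / ψ` with `F t = ∫₀ᵗ x*`. Both `F` and `ψ` are nonnegative, nondecreasing and
concave on some `[s₀, ∞)`, so for `s₀ < b ≤ a` each of them grows from `b` to `a` at most by the
factor `(a - s₀) / (b - s₀)`; hence `|φ(x)(a) - φ(x)(b)| ≤ (a - b) / (b - s₀) · ‖x‖_{M(ψ)}`.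
Since `κ₁ - κ₂` is bounded, `φ(x) ∘ κ₁ - φ(x) ∘ κ₂` tends to `0`, and a Banach limit, being
positive and shift invariant, vanishes on bounded functions tending to `0`.
-/

theorem ConcaveOn.mul_sub_le_mul_sub {f : ℝ → ℝ} {s₀ a b : ℝ} (hf : ConcaveOn ℝ (Ici s₀) f)
    (hf₀ : 0 ≤ f s₀) (hb : s₀ ≤ b) (hba : b ≤ a) : f a * (b - s₀) ≤ f b * (a - s₀) := by
  rcases hb.eq_or_lt with rfl | hb
  · simpa using mul_nonneg hf₀ (sub_nonneg.2 hba)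
  rcases hba.eq_or_lt with rfl | hba
  · rfl
  have hslope := hf.slope_anti_adjacent self_mem_Ici (mem_Ici.2 (hb.trans hba).le) hb hba
  rw [div_le_div_iff₀ (sub_pos.2 hba) (sub_pos.2 hb)] at hslope
  nlinarith

theorem ConcaveOn.monotoneOn_of_tendsto_atTop {f : ℝ → ℝ} {s₀ : ℝ}
    (hf : ConcaveOn ℝ (Ici s₀) f) (hlim : Tendsto f atTop atTop) : MonotoneOn f (Ici s₀) := by
  intro b hb a ha hba
  rcases hba.eq_or_lt with rfl | hba
  · rfl
  obtain ⟨T, hfT, haT⟩ :=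
    ((hlim.eventually_ge_atTop (f a)).and (eventually_gt_atTop a)).exists
  have hslope := hf.slope_anti_adjacent hb (mem_Ici.2 ((mem_Ici.1 ha).trans haT.le)) hba haT
  rw [div_le_div_iff₀ (sub_pos.2 haT) (sub_pos.2 hba)] at hslope
  nlinarith

theorem abs_div_sub_div_le_of_concaveOn {F G : ℝ → ℝ} {s₀ a b : ℝ}
    (hF : ConcaveOn ℝ (Ici s₀) F) (hFm : MonotoneOn F (Ici s₀)) (hF₀ : 0 ≤ F s₀)
    (hG : ConcaveOn ℝ (Ici s₀) G) (hGm : MonotoneOn G (Ici s₀)) (hG₀ : 0 ≤ G s₀)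
    (hb : s₀ < b) (hba : b ≤ a) (hGb : 0 < G b) :
    |F a / G a - F b / G b| ≤ (a - b) / (b - s₀) * (F b / G b) := by
  have hbs : b ∈ Ici s₀ := mem_Ici.2 hb.le
  have has : a ∈ Ici s₀ := mem_Ici.2 (hb.le.trans hba)
  set p := (a - b) / (b - s₀)
  have hp : 0 ≤ p := div_nonneg (sub_nonneg.2 hba) (sub_pos.2 hb).le
  have growth_le {f : ℝ → ℝ} (hf : ConcaveOn ℝ (Ici s₀) f) (hf₀ : 0 ≤ f s₀) :
      f a ≤ (1 + p) * f b := by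
    have hp' : (1 + p) * (b - s₀) = a - s₀ := by
      simp only [p]; field_simp [(sub_pos.2 hb).ne']; ring
    refine le_of_mul_le_mul_right ?_ (sub_pos.2 hb)
    calc f a * (b - s₀) ≤ f b * (a - s₀) := hf.mul_sub_le_mul_sub hf₀ hb.le hba
      _ = (1 + p) * f b * (b - s₀) := by rw [← hp']; ring
  have hFb : 0 ≤ F b := hF₀.trans (hFm self_mem_Ici hbs hb.le)
  have hFab := hFm hbs has hba
  have hGab := hGm hbs has hba
  have hFa := growth_le hF hF₀
  have hGa := growth_le hG hG₀
  have hGa' : 0 < G a := hGb.trans_le hGab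
  rw [div_sub_div _ _ hGa'.ne' hGb.ne', abs_div, abs_of_pos (mul_pos hGa' hGb),
    div_le_iff₀ (mul_pos hGa' hGb), abs_le]
  field_simp
  constructor <;> nlinarith [mul_le_mul_of_nonneg_left hGab hFb, mul_nonneg hp hFb,
    mul_le_mul_of_nonneg_left hGa hFb, mul_le_mul_of_nonneg_left hFa hGb.le,
    mul_le_mul_of_nonneg_left hGab (mul_nonneg hp hFb)]

namespace OmegaInf

variable {ψ : ℝ → ℝ} (hψ : OmegaInf ψ)
include hψ

theorem monotoneOn : MonotoneOn ψ (Ici 0) :=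
  hψ.1.monotoneOn_of_tendsto_atTop hψ.2.2.2

theorem pos {t : ℝ} (ht : 0 < t) : 0 < ψ t := by
  obtain ⟨T, hψT, htT⟩ := ((hψ.2.2.2.eventually_gt_atTop 0).and (eventually_ge_atTop t)).exists
  have := hψ.1.mul_sub_le_mul_sub (hψ.2.1 0 self_mem_Ici) ht.le htT
  simp only [sub_zero] at this
  nlinarith [mul_pos hψT ht]

theorem continuousOn : ContinuousOn ψ (Ioi 0) := by
  simpa using hψ.1.continuousOn_interior

end OmegaInf

theorem AntitoneOn.concaveOn_intervalIntegral {g : ℝ → ℝ} {s : Set ℝ} (hs : s.OrdConnected)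
    (hg : AntitoneOn g s) (hint : ∀ a b, IntervalIntegrable g volume a b) (c : ℝ) :
    ConcaveOn ℝ s fun t => ∫ u in c..t, g u := by
  refine concaveOn_of_slope_anti_adjacent hs.convex fun {x y z} hx hz hxy hyz => ?_
  have hy : y ∈ s := hs.out hx hz ⟨hxy.le, hyz.le⟩
  rw [intervalIntegral.integral_interval_sub_left (hint _ _) (hint _ _),
    intervalIntegral.integral_interval_sub_left (hint _ _) (hint _ _)]
  have upper : ∫ u in y..z, g u ≤ (z - y) * g y := by
    simpa using intervalIntegral.integral_mono_on hyz.le (hint _ _) intervalIntegrable_const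
      fun u hu => hg hy (hs.out hy hz hu) hu.1
  have lower : (y - x) * g y ≤ ∫ u in x..y, g u := by
    simpa using intervalIntegral.integral_mono_on hxy.le intervalIntegrable_const (hint _ _)
      fun u hu => hg (hs.out hx hy hu) hy hu.2
  calc (∫ u in y..z, g u) / (z - y) ≤ g y := by rwa [div_le_iff₀ (sub_pos.2 hyz), mul_comm]
    _ ≤ (∫ u in x..y, g u) / (y - x) := by rwa [le_div_iff₀ (sub_pos.2 hxy), mul_comm]

def decRearrLevels (x : ℝ → ℝ) (t : ℝ) : Set ℝ :=
  {s : ℝ | 0 ≤ s ∧ volume {u : ℝ | 0 ≤ u ∧ s < |x u|} ≤ ENNReal.ofReal t}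

section decRearr

variable {x : ℝ → ℝ}

theorem decRearr_eq_sInf (x : ℝ → ℝ) (t : ℝ) : decRearr x t = sInf (decRearrLevels x t) := rfl

theorem decRearrLevels_mono (x : ℝ → ℝ) : Monotone (decRearrLevels x) :=
  fun _ _ h _ hs => ⟨hs.1, hs.2.trans (ENNReal.ofReal_le_ofReal h)⟩

theorem decRearr_nonneg (x : ℝ → ℝ) (t : ℝ) : 0 ≤ decRearr x t :=
  Real.sInf_nonneg fun _ hs => hs.1

theorem decRearr_eq_zero_of_decRearrLevels_eq_empty {t : ℝ} (h : decRearrLevels x t = ∅) :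
    decRearr x t = 0 := by
  rw [decRearr_eq_sInf, h, Real.sInf_empty]

theorem decRearr_of_nonpos {t : ℝ} (ht : t ≤ 0) : decRearr x t = decRearr x 0 := by
  simp only [decRearr, ENNReal.ofReal_of_nonpos ht, ENNReal.ofReal_zero]

theorem antitoneOn_decRearr {t₀ : ℝ} (h : (decRearrLevels x t₀).Nonempty) :
    AntitoneOn (decRearr x) (Ici t₀) := fun _ ha _ _ hab =>
  csInf_le_csInf ⟨0, fun _ hs => hs.1⟩ (h.mono (decRearrLevels_mono x ha))
    (decRearrLevels_mono x hab)

theorem exists_antitoneOn_decRearr (x : ℝ → ℝ) :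
    ∃ s₀ ≥ 0, AntitoneOn (decRearr x) (Ici s₀) := by
  by_cases h : ∃ t ≥ 0, (decRearrLevels x t).Nonempty
  · obtain ⟨t, ht, hne⟩ := h
    exact ⟨t, ht, antitoneOn_decRearr hne⟩
  · push Not at h
    refine ⟨0, le_rfl, fun a ha b hb _ => ?_⟩
    rw [decRearr_eq_zero_of_decRearrLevels_eq_empty (h a ha),
      decRearr_eq_zero_of_decRearrLevels_eq_empty (h b hb)]

theorem intervalIntegrable_decRearr_of_nonpos {a : ℝ} (ha : a ≤ 0) :
    IntervalIntegrable (decRearr x) volume a 0 := by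
  refine (intervalIntegrable_const (c := decRearr x 0)).congr ?_
  intro t ht
  rw [uIoc_of_le ha] at ht
  exact (decRearr_of_nonpos ht.2).symm

/-- The second alternative is the junk value of `∫` at a non-integrable integrand; it does occur,
e.g. for `x* t = 1 / t`. -/
theorem intervalIntegrable_decRearr_or_integral_eq_zero (x : ℝ → ℝ) :
    (∀ a b, IntervalIntegrable (decRearr x) volume a b) ∨
      ∀ t ≥ 0, ∫ s in (0:ℝ)..t, decRearr x s = 0 := by
  by_cases hint : ∀ t > 0, IntervalIntegrable (decRearr x) volume 0 t
  · left
    have h0 (t : ℝ) : IntervalIntegrable (decRearr x) volume 0 t := by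
      rcases le_or_gt t 0 with ht | ht
      · exact (intervalIntegrable_decRearr_of_nonpos ht).symm
      · exact hint t ht
    exact fun a b => (h0 a).symm.trans (h0 b)
  right
  push Not at hint
  obtain ⟨t₁, ht₁, hnot⟩ := hint
  intro t ht
  by_cases hII : IntervalIntegrable (decRearr x) volume 0 t
  swap
  · exact intervalIntegral.integral_undef hII
  -- a nonempty level set at some `s < t` would make `decRearr x` integrable on `[0, t₁]`
  have hzero : ∀ s ∈ Ioo 0 t, decRearr x s = 0 := by
    intro s hs
    refine decRearr_eq_zero_of_decRearrLevels_eq_empty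
      (not_nonempty_iff_eq_empty.1 fun hne => hnot ?_)
    have h0s : IntervalIntegrable (decRearr x) volume 0 s :=
      hII.mono_set (uIcc_subset_uIcc_left (mem_uIcc_of_le hs.1.le hs.2.le))
    have hss : IntervalIntegrable (decRearr x) volume s (s + t₁) :=
      ((antitoneOn_decRearr hne).mono (by
        rw [uIcc_of_le (by linarith)]; exact Icc_subset_Ici_self)).intervalIntegrable
    exact (h0s.trans hss).mono_set
      (uIcc_subset_uIcc_left (mem_uIcc_of_le ht₁.le (by linarith [hs.1])))
  rw [intervalIntegral.integral_of_le ht, integral_Ioc_eq_integral_Ioo]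
  exact setIntegral_eq_zero_of_forall_eq_zero hzero

theorem monotoneOn_integral_decRearr (x : ℝ → ℝ) :
    MonotoneOn (fun t => ∫ s in (0:ℝ)..t, decRearr x s) (Ici 0) := by
  intro a ha b hb hab
  rcases intervalIntegrable_decRearr_or_integral_eq_zero x with hint | hzero
  · exact intervalIntegral.integral_mono_interval le_rfl ha hab
      (Eventually.of_forall fun u => decRearr_nonneg x u) (hint 0 b)
  · exact ((hzero a ha).trans (hzero b hb).symm).le

theorem continuousOn_integral_decRearr (x : ℝ → ℝ) :
    ContinuousOn (fun t => ∫ s in (0:ℝ)..t, decRearr x s) (Ici 0) := by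
  rcases intervalIntegrable_decRearr_or_integral_eq_zero x with hint | hzero
  · exact (intervalIntegral.continuous_primitive hint 0).continuousOn
  · exact continuousOn_const.congr hzero

theorem exists_concaveOn_integral_decRearr (x : ℝ → ℝ) :
    ∃ s₀ ≥ 0, ConcaveOn ℝ (Ici s₀) fun t => ∫ s in (0:ℝ)..t, decRearr x s := by
  rcases intervalIntegrable_decRearr_or_integral_eq_zero x with hint | hzero
  · obtain ⟨s₀, hs₀, hanti⟩ := exists_antitoneOn_decRearr x
    exact ⟨s₀, hs₀, hanti.concaveOn_intervalIntegral ordConnected_Ici hint 0⟩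
  · exact ⟨0, le_rfl, (concaveOn_const 0 (convex_Ici 0)).congr fun t ht => (hzero t ht).symm⟩

end decRearr

theorem isCb_const (c : ℝ) : IsCb fun _ => c :=
  ⟨continuousOn_const, |c|, fun _ _ => le_rfl⟩

theorem IsCb.const_mul {f : ℝ → ℝ} (c : ℝ) (hf : IsCb f) : IsCb fun t => c * f t := by
  obtain ⟨hfc, M, hM⟩ := hf
  refine ⟨continuousOn_const.mul hfc, |c| * M, fun t ht => ?_⟩
  rw [abs_mul]
  exact mul_le_mul_of_nonneg_left (hM t ht) (abs_nonneg c)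

theorem IsCb.sub {f g : ℝ → ℝ} (hf : IsCb f) (hg : IsCb g) : IsCb fun t => f t - g t := by
  obtain ⟨hfc, Mf, hMf⟩ := hf
  obtain ⟨hgc, Mg, hMg⟩ := hg
  exact ⟨hfc.sub hgc, Mf + Mg, fun t ht =>
    (abs_sub _ _).trans (add_le_add (hMf t ht) (hMg t ht))⟩

theorem IsCb.comp_add_const {f : ℝ → ℝ} (hf : IsCb f) {s : ℝ} (hs : 0 ≤ s) :
    IsCb fun t => f (t + s) := by
  obtain ⟨hfc, M, hM⟩ := hf
  have hmaps : MapsTo (· + s) (Ici (0:ℝ)) (Ici 0) := fun t ht => add_nonneg ht hs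
  exact ⟨hfc.comp (continuous_add_const s).continuousOn hmaps, M, fun t ht => hM _ (hmaps ht)⟩

theorem isBddSeq_const (c : ℝ) : IsBddSeq fun _ => c := ⟨|c|, fun _ => le_rfl⟩

theorem IsBddSeq.const_mul {a : ℕ → ℝ} (c : ℝ) (ha : IsBddSeq a) :
    IsBddSeq fun n => c * a n := by
  obtain ⟨M, hM⟩ := ha
  refine ⟨|c| * M, fun n => ?_⟩
  rw [abs_mul]
  exact mul_le_mul_of_nonneg_left (hM n) (abs_nonneg c)

theorem IsBddSeq.sub {a b : ℕ → ℝ} (ha : IsBddSeq a) (hb : IsBddSeq b) :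
    IsBddSeq fun n => a n - b n := by
  obtain ⟨Ma, hMa⟩ := ha
  obtain ⟨Mb, hMb⟩ := hb
  exact ⟨Ma + Mb, fun n => (abs_sub _ _).trans (add_le_add (hMa n) (hMb n))⟩

theorem IsBddSeq.comp_succ {a : ℕ → ℝ} (ha : IsBddSeq a) : IsBddSeq fun n => a (n + 1) := by
  obtain ⟨M, hM⟩ := ha
  exact ⟨M, fun n => hM (n + 1)⟩

namespace BanachLimitR

variable (L : BanachLimitR) {f g : ℝ → ℝ}

theorem map_const (c : ℝ) : L.toFun (fun _ => c) = c := by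
  simpa [L.map_one] using L.map_smul c (fun _ => 1) (isCb_const 1)

theorem map_sub (hf : IsCb f) (hg : IsCb g) :
    L.toFun (fun t => f t - g t) = L.toFun f - L.toFun g := by
  have h := L.map_add f (fun t => -1 * g t) hf (hg.const_mul (-1))
  rw [L.map_smul (-1) g hg] at h
  simpa only [neg_one_mul, ← sub_eq_add_neg] using h

theorem abs_toFun_le {c : ℝ} (hf : IsCb f) (h : ∀ t ∈ Ici (0:ℝ), |f t| ≤ c) :
    |L.toFun f| ≤ c := by
  have lower := L.pos _ (hf.sub (isCb_const (-c)))
    fun t ht => sub_nonneg.2 (neg_le_of_abs_le (h t ht))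
  have upper := L.pos _ ((isCb_const c).sub hf)
    fun t ht => sub_nonneg.2 (le_of_abs_le (h t ht))
  rw [L.map_sub hf (isCb_const _), L.map_const] at lower
  rw [L.map_sub (isCb_const _) hf, L.map_const] at upper
  exact abs_le.2 ⟨by linarith, by linarith⟩

theorem abs_toFun_le_of_forall_ge {c s : ℝ} (hf : IsCb f) (hs : 0 ≤ s)
    (h : ∀ t ≥ s, |f t| ≤ c) : |L.toFun f| ≤ c := by
  rw [← L.shift_inv f hf s hs]
  exact L.abs_toFun_le (hf.comp_add_const hs) fun t ht => h _ (le_add_of_nonneg_left ht)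

theorem toFun_eq_zero_of_tendsto (hf : IsCb f) (h : Tendsto f atTop (𝓝 0)) : L.toFun f = 0 := by
  refine eq_of_forall_dist_le fun ε hε => ?_
  obtain ⟨s, hs⟩ := eventually_atTop.1 (h.eventually (Metric.closedBall_mem_nhds 0 hε))
  rw [Real.dist_0_eq_abs]
  exact L.abs_toFun_le_of_forall_ge hf (le_max_right s 0) fun t ht => by
    simpa using hs t ((le_max_left s 0).trans ht)

theorem toFun_eq_of_tendsto_sub (hf : IsCb f) (hg : IsCb g)
    (h : Tendsto (fun t => f t - g t) atTop (𝓝 0)) : L.toFun f = L.toFun g :=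
  sub_eq_zero.1 (L.map_sub hf hg ▸ L.toFun_eq_zero_of_tendsto (hf.sub hg) h)

end BanachLimitR

namespace BanachLimitN

variable (L : BanachLimitN) {a b : ℕ → ℝ}

theorem map_const (c : ℝ) : L.toFun (fun _ => c) = c := by
  simpa [L.map_one] using L.map_smul c (fun _ => 1) (isBddSeq_const 1)

theorem map_sub (ha : IsBddSeq a) (hb : IsBddSeq b) :
    L.toFun (fun n => a n - b n) = L.toFun a - L.toFun b := by
  have h := L.map_add a (fun n => -1 * b n) ha (hb.const_mul (-1))
  rw [L.map_smul (-1) b hb] at h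
  simpa only [neg_one_mul, ← sub_eq_add_neg] using h

theorem abs_toFun_le {c : ℝ} (ha : IsBddSeq a) (h : ∀ n, |a n| ≤ c) : |L.toFun a| ≤ c := by
  have lower := L.pos _ (ha.sub (isBddSeq_const (-c)))
    fun n => sub_nonneg.2 (neg_le_of_abs_le (h n))
  have upper := L.pos _ ((isBddSeq_const c).sub ha)
    fun n => sub_nonneg.2 (le_of_abs_le (h n))
  rw [L.map_sub ha (isBddSeq_const _), L.map_const] at lower
  rw [L.map_sub (isBddSeq_const _) ha, L.map_const] at upper
  exact abs_le.2 ⟨by linarith, by linarith⟩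

theorem abs_toFun_le_of_forall_ge {c : ℝ} (N : ℕ) (ha : IsBddSeq a)
    (h : ∀ n ≥ N, |a n| ≤ c) : |L.toFun a| ≤ c := by
  induction N generalizing a with
  | zero => exact L.abs_toFun_le ha fun n => h n n.zero_le
  | succ N ih =>
    rw [← L.shift_inv a ha]
    exact ih ha.comp_succ fun n hn => h _ (Nat.succ_le_succ hn)

theorem toFun_eq_zero_of_tendsto (ha : IsBddSeq a) (h : Tendsto a atTop (𝓝 0)) :
    L.toFun a = 0 := by
  refine eq_of_forall_dist_le fun ε hε => ?_
  obtain ⟨N, hN⟩ := eventually_atTop.1 (h.eventually (Metric.closedBall_mem_nhds 0 hε))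
  rw [Real.dist_0_eq_abs]
  exact L.abs_toFun_le_of_forall_ge N ha fun n hn => by simpa using hN n hn

theorem toFun_eq_of_tendsto_sub (ha : IsBddSeq a) (hb : IsBddSeq b)
    (h : Tendsto (fun n => a n - b n) atTop (𝓝 0)) : L.toFun a = L.toFun b :=
  sub_eq_zero.1 (L.map_sub ha hb ▸ L.toFun_eq_zero_of_tendsto (ha.sub hb) h)

end BanachLimitN

section phiW

variable {ψ x κ : ℝ → ℝ}

theorem phiW_nonneg (hψ : OmegaInf ψ) (x : ℝ → ℝ) {t : ℝ} (ht : 0 ≤ t) : 0 ≤ phiW ψ x t :=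
  div_nonneg (intervalIntegral.integral_nonneg ht fun u _ => decRearr_nonneg x u) (hψ.2.1 t ht)

theorem continuousOn_phiW (hψ : OmegaInf ψ) (x : ℝ → ℝ) : ContinuousOn (phiW ψ x) (Ioi 0) :=
  ((continuousOn_integral_decRearr x).mono Ioi_subset_Ici_self).div hψ.continuousOn
    fun _ ht => (hψ.pos ht).ne'

theorem abs_phiW_sub_le (hψ : OmegaInf ψ) (x : ℝ → ℝ) :
    ∃ s₀ ≥ 0, ∀ a b, s₀ < b → b ≤ a →
      |phiW ψ x a - phiW ψ x b| ≤ (a - b) / (b - s₀) * phiW ψ x b := by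
  obtain ⟨s₀, hs₀, hconc⟩ := exists_concaveOn_integral_decRearr x
  have hsub : Ici s₀ ⊆ Ici 0 := Ici_subset_Ici.2 hs₀
  refine ⟨s₀, hs₀, fun a b hb hba => ?_⟩
  exact abs_div_sub_div_le_of_concaveOn hconc ((monotoneOn_integral_decRearr x).mono hsub)
    (intervalIntegral.integral_nonneg hs₀ fun u _ => decRearr_nonneg x u)
    (hψ.1.subset hsub (convex_Ici s₀)) (hψ.monotoneOn.mono hsub) (hψ.2.1 s₀ hs₀) hb hba
    (hψ.pos (hs₀.trans_lt hb))

theorem MemM.tendsto_phiW_sub {α : Type*} {l : Filter α} {u v : α → ℝ} {B : ℝ}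
    (hψ : OmegaInf ψ) (hx : MemM ψ x) (hv : Tendsto v l atTop)
    (huv : ∀ᶠ i in l, |u i - v i| ≤ B) :
    Tendsto (fun i => phiW ψ x (u i) - phiW ψ x (v i)) l (𝓝 0) := by
  obtain ⟨s₀, hs₀, hdiff⟩ := abs_phiW_sub_le hψ x
  obtain ⟨M, hM⟩ := hx.2
  have key : ∀ a b c, b ≤ a → a - b ≤ B → 0 < c → c ≤ b - s₀ →
      |phiW ψ x a - phiW ψ x b| ≤ B * M / c := by
    intro a b c hba hab hc hcb
    have hb : s₀ < b := by linarith
    calc |phiW ψ x a - phiW ψ x b| ≤ (a - b) / (b - s₀) * phiW ψ x b := hdiff a b hb hba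
      _ ≤ B / c * M :=
        mul_le_mul (div_le_div₀ (by linarith) hab hc hcb) (hM b (hs₀.trans_lt hb))
          (phiW_nonneg hψ x (hs₀.trans hb.le)) (div_nonneg (by linarith) hc.le)
      _ = B * M / c := div_mul_eq_mul_div B c M
  have hlim : Tendsto (fun i => v i - (B + s₀)) l atTop := by
    simpa only [← sub_eq_add_neg] using tendsto_atTop_add_const_right l (-(B + s₀)) hv
  refine squeeze_zero_norm' ?_ ((tendsto_const_nhds (x := B * M)).div_atTop hlim)
  filter_upwards [huv, hlim.eventually_gt_atTop 0] with i hi hc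
  rw [Real.norm_eq_abs]
  rcases le_total (v i) (u i) with h | h
  · exact key _ _ _ h (le_of_abs_le hi) hc (by linarith [abs_nonneg (u i - v i)])
  · rw [abs_sub_comm]
    have := neg_abs_le (u i - v i)
    exact key _ _ _ h (by linarith) hc (by linarith)

theorem MemM.exists_abs_phiW_le (hψ : OmegaInf ψ) (hx : MemM ψ x) :
    ∃ M, ∀ t > 0, |phiW ψ x t| ≤ M := by
  obtain ⟨M, hM⟩ := hx.2
  exact ⟨M, fun t ht => abs_le.2 ⟨by linarith [phiW_nonneg hψ x ht.le, hM t ht], hM t ht⟩⟩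

theorem MemM.isCb_phiW_comp (hψ : OmegaInf ψ) (hx : MemM ψ x) (hc : ContinuousOn κ (Ici 0))
    (hp : ∀ t > 0, 0 < κ t) : IsCb fun t => phiW ψ x (κ (max t 1)) := by
  obtain ⟨M, hM⟩ := hx.exists_abs_phiW_le hψ
  have hpos (t : ℝ) : 0 < κ (max t 1) := hp _ (one_pos.trans_le (le_max_right t 1))
  refine ⟨(continuousOn_phiW hψ x).comp ?_ fun t _ => hpos t, M, fun t _ => hM _ (hpos t)⟩
  exact hc.comp (continuous_id.max continuous_const).continuousOn
    fun t _ => zero_le_one.trans (le_max_right t 1)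

theorem MemM.isBddSeq_phiW_comp (hψ : OmegaInf ψ) (hx : MemM ψ x) (hp : ∀ t > 0, 0 < κ t) :
    IsBddSeq fun n : ℕ => phiW ψ x (κ n) := by
  obtain ⟨M, hM⟩ := hx.exists_abs_phiW_le hψ
  refine ⟨max M |phiW ψ x (κ 0)|, fun n => ?_⟩
  rcases n.eq_zero_or_pos with rfl | hn
  · simp
  · exact (hM _ (hp n (Nat.cast_pos.2 hn))).trans (le_max_left _ _)

end phiW

theorem fL_eq_of_sub_bounded_general (ψ κ₁ κ₂ : ℝ → ℝ) (hψ : OmegaInf ψ)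
    (hc₁ : ContinuousOn κ₁ (Ici 0))
    (hp₁ : ∀ t > (0:ℝ), 0 < κ₁ t)
    (hc₂ : ContinuousOn κ₂ (Ici 0))
    (hu₂ : Tendsto κ₂ atTop atTop) (hp₂ : ∀ t > (0:ℝ), 0 < κ₂ t)
    (hbd : ∃ B : ℝ, ∀ t ≥ (0:ℝ), |κ₁ t - κ₂ t| ≤ B) :
    (∀ L : BanachLimitR, ∀ x : ℝ → ℝ, MemMplus ψ x → fL L ψ κ₁ x = fL L ψ κ₂ x) ∧
    (∀ L' : BanachLimitN, ∀ x : ℝ → ℝ, MemMplus ψ x → fLN L' ψ κ₁ x = fLN L' ψ κ₂ x) := by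
  obtain ⟨B, hB⟩ := hbd
  refine ⟨fun L x hx => ?_, fun L' x hx => ?_⟩
  · have hmax : Tendsto (fun t : ℝ => max t 1) atTop atTop :=
      tendsto_atTop_mono (le_max_left · 1) tendsto_id
    exact L.toFun_eq_of_tendsto_sub (hx.1.isCb_phiW_comp hψ hc₁ hp₁)
      (hx.1.isCb_phiW_comp hψ hc₂ hp₂) (hx.1.tendsto_phiW_sub hψ (hu₂.comp hmax)
        (Eventually.of_forall fun t => hB _ (zero_le_one.trans (le_max_right t 1))))
  · exact L'.toFun_eq_of_tendsto_sub (hx.1.isBddSeq_phiW_comp hψ hp₁)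
      (hx.1.isBddSeq_phiW_comp hψ hp₂) (hx.1.tendsto_phiW_sub hψ
        (hu₂.comp tendsto_natCast_atTop_atTop) (Eventually.of_forall fun n => hB _ n.cast_nonneg))

/-- if `κ₁, κ₂` are increasing, continuous, unbounded and
positive on `(0,∞)` with `κ₁ - κ₂` bounded, then they generate the same
functionals `f_{L,κ}` and `f_{L',κ}` on `M₊(ψ)`. -/
theorem fL_eq_of_sub_bounded (ψ κ₁ κ₂ : ℝ → ℝ) (hψ : OmegaInf ψ)
    (hm₁ : MonotoneOn κ₁ (Ici 0)) (hc₁ : ContinuousOn κ₁ (Ici 0))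
    (hu₁ : Tendsto κ₁ atTop atTop) (hp₁ : ∀ t > (0:ℝ), 0 < κ₁ t)
    (hm₂ : MonotoneOn κ₂ (Ici 0)) (hc₂ : ContinuousOn κ₂ (Ici 0))
    (hu₂ : Tendsto κ₂ atTop atTop) (hp₂ : ∀ t > (0:ℝ), 0 < κ₂ t)
    (hbd : ∃ B : ℝ, ∀ t ≥ (0:ℝ), |κ₁ t - κ₂ t| ≤ B) :
    (∀ L : BanachLimitR, ∀ x : ℝ → ℝ, MemMplus ψ x → fL L ψ κ₁ x = fL L ψ κ₂ x) ∧
    (∀ L' : BanachLimitN, ∀ x : ℝ → ℝ, MemMplus ψ x → fLN L' ψ κ₁ x = fLN L' ψ κ₂ x) :=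
  fL_eq_of_sub_bounded_general ψ κ₁ κ₂ hψ hc₁ hp₁ hc₂ hu₂ hp₂ hbd
end
end

section
/- Let L' be a Banach limit on ℓ∞(ℕ). Then L(g) := L'({∫_{n−1}^{n} g(s) ds}_{n≥1}), for g ∈ C_b([0,∞)), defines a Banach limit on C_b([0,∞)); that is, L is a positive linear functional on C_b([0,∞)) with L(1) = 1 and L(g(·+a)) = L(g) for every a ≥ 0 and every g ∈ C_b([0,∞)). -/
open MeasureTheory Filter Set

noncomputable section

lemma IsCb.intervalIntegrable {f : ℝ → ℝ} (hf : IsCb f) {a b : ℝ}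
    (ha : 0 ≤ a) (hb : 0 ≤ b) : IntervalIntegrable f volume a b := by
  apply ContinuousOn.intervalIntegrable
  exact hf.1.mono fun x hx => le_trans (le_min ha hb) hx.1

lemma IsCb.abs_integral_le {f : ℝ → ℝ} (hf : IsCb f) {M : ℝ}
    (hM : ∀ t ∈ Ici (0:ℝ), |f t| ≤ M) {a b : ℝ} (ha : 0 ≤ a) (hab : a ≤ b) :
    |∫ s in a..b, f s| ≤ M * (b - a) := by
  have := intervalIntegral.norm_integral_le_of_norm_le_const
    (C := M) (f := f) (a := a) (b := b) (fun x hx => by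
      have h0 : 0 ≤ x := le_trans (le_min ha (le_trans ha hab)) (le_of_lt hx.1)
      simpa using hM x h0)
  simpa [abs_of_nonneg (sub_nonneg.2 hab)] using this

lemma IsCb.bddSeq {f : ℝ → ℝ} (hf : IsCb f) :
    IsBddSeq (fun n : ℕ => ∫ s in (n:ℝ)..((n:ℝ) + 1), f s) := by
  obtain ⟨M, hM⟩ := hf.2
  refine ⟨M, fun n => ?_⟩
  have := hf.abs_integral_le hM (a := (n:ℝ)) (b := (n:ℝ)+1) (Nat.cast_nonneg n)
    (by linarith)
  simpa using this

/-- `L(g) := L'({∫_{n-1}^n g(s) ds}_{n≥1})` defines a Banach limit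
on `C_b([0,∞))` whenever `L'` is a Banach limit on `ℓ∞(ℕ)`. -/
theorem banachLimitR_of_banachLimitN (L' : BanachLimitN) :
    ∃ L : BanachLimitR,
      ∀ g : ℝ → ℝ, L.toFun g = L'.toFun (fun n => ∫ s in (n:ℝ)..((n:ℝ) + 1), g s) := by
  refine ⟨⟨fun g => L'.toFun (fun n => ∫ s in (n:ℝ)..((n:ℝ) + 1), g s),
    ?_, ?_, ?_, ?_, ?_⟩, fun g => rfl⟩
  · -- map_add
    intro f g hf hg
    have h : (fun n : ℕ => ∫ s in (n:ℝ)..((n:ℝ) + 1), (f s + g s))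
        = fun n : ℕ => (∫ s in (n:ℝ)..((n:ℝ) + 1), f s)
          + ∫ s in (n:ℝ)..((n:ℝ) + 1), g s := by
      funext n
      exact intervalIntegral.integral_add
        (hf.intervalIntegrable (Nat.cast_nonneg n) (by positivity))
        (hg.intervalIntegrable (Nat.cast_nonneg n) (by positivity))
    rw [show (fun t => f t + g t) = fun t => f t + g t from rfl]
    simpa [h] using L'.map_add _ _ hf.bddSeq hg.bddSeq
  · -- map_smul
    intro c f hf
    have h : (fun n : ℕ => ∫ s in (n:ℝ)..((n:ℝ) + 1), c * f s)
        = fun n : ℕ => c * ∫ s in (n:ℝ)..((n:ℝ) + 1), f s := by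
      funext n
      simpa using intervalIntegral.integral_const_mul c f
    simpa [h] using L'.map_smul c _ hf.bddSeq
  · -- pos
    intro f hf hpos
    refine L'.pos _ hf.bddSeq fun n => ?_
    refine intervalIntegral.integral_nonneg (by linarith [Nat.cast_nonneg (α := ℝ) n])
      fun u hu => hpos u (le_trans (Nat.cast_nonneg n) hu.1)
  · -- map_one
    have h : (fun n : ℕ => ∫ s in (n:ℝ)..((n:ℝ) + 1), (1:ℝ)) = fun _ : ℕ => (1:ℝ) := by
      funext n; simp
    show L'.toFun (fun n : ℕ => ∫ s in (n:ℝ)..((n:ℝ) + 1), (1:ℝ)) = 1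
    rw [h]; exact L'.map_one
  · -- shift invariance
    intro f hf s hs
    show L'.toFun (fun n : ℕ => ∫ t in (n:ℝ)..((n:ℝ) + 1), f (t + s))
      = L'.toFun (fun n : ℕ => ∫ t in (n:ℝ)..((n:ℝ) + 1), f t)
    obtain ⟨M, hM⟩ := hf.2
    set A : ℕ → ℝ := fun n => ∫ u in (n:ℝ)..((n:ℝ) + 1), f u with hA
    set B : ℕ → ℝ := fun n => ∫ u in (n:ℝ)..((n:ℝ) + s), f u with hB
    have hBbdd : IsBddSeq B := by
      refine ⟨M * s, fun n => ?_⟩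
      have := hf.abs_integral_le hM (a := (n:ℝ)) (b := (n:ℝ) + s)
        (Nat.cast_nonneg n) (by linarith)
      simpa using this
    have key : (fun n : ℕ => ∫ t in (n:ℝ)..((n:ℝ) + 1), f (t + s))
        = fun n : ℕ => A n + ((-1) * B n + B (n + 1)) := by
      funext n
      have h1 : (∫ t in (n:ℝ)..((n:ℝ) + 1), f (t + s))
          = ∫ u in ((n:ℝ) + s)..((n:ℝ) + 1 + s), f u := by
        simpa using intervalIntegral.integral_comp_add_right (a := (n:ℝ))
          (b := (n:ℝ) + 1) f s
      have hn0 : (0:ℝ) ≤ (n:ℝ) := Nat.cast_nonneg n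
      have i1 : IntervalIntegrable f volume (n:ℝ) ((n:ℝ) + s) :=
        hf.intervalIntegrable hn0 (by linarith)
      have i2 : IntervalIntegrable f volume ((n:ℝ) + s) ((n:ℝ) + 1 + s) :=
        hf.intervalIntegrable (by linarith) (by linarith)
      have i3 : IntervalIntegrable f volume (n:ℝ) ((n:ℝ) + 1) :=
        hf.intervalIntegrable hn0 (by linarith)
      have i4 : IntervalIntegrable f volume ((n:ℝ) + 1) ((n:ℝ) + 1 + s) :=
        hf.intervalIntegrable (by linarith) (by linarith)
      have e1 : B n + (∫ u in ((n:ℝ) + s)..((n:ℝ) + 1 + s), f u)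
          = ∫ u in (n:ℝ)..((n:ℝ) + 1 + s), f u :=
        intervalIntegral.integral_add_adjacent_intervals i1 i2
      have e2 : A n + (∫ u in ((n:ℝ) + 1)..((n:ℝ) + 1 + s), f u)
          = ∫ u in (n:ℝ)..((n:ℝ) + 1 + s), f u :=
        intervalIntegral.integral_add_adjacent_intervals i3 i4
      have eB : B (n + 1) = ∫ u in ((n:ℝ) + 1)..((n:ℝ) + 1 + s), f u := by
        simp only [hB]
        push_cast
        ring_nf
      rw [h1]
      rw [eB]
      linarith [e1, e2]
    rw [key]
    obtain ⟨K, hK⟩ := hBbdd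
    have hBshift : IsBddSeq (fun n : ℕ => (-1) * B n + B (n + 1)) := by
      refine ⟨K + K, fun n => ?_⟩
      calc |(-1) * B n + B (n + 1)| ≤ |(-1) * B n| + |B (n + 1)| := abs_add_le _ _
        _ ≤ K + K := by
          rw [neg_one_mul, abs_neg]
          exact add_le_add (hK n) (hK (n + 1))
    rw [L'.map_add A _ hf.bddSeq hBshift,
      L'.map_add _ _ ⟨K, fun n => by rw [neg_one_mul, abs_neg]; exact hK n⟩
        ⟨K, fun n => hK (n + 1)⟩,
      L'.map_smul (-1) B ⟨K, hK⟩, L'.shift_inv B ⟨K, hK⟩]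
    ring
end
end
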